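/- Let Σ be a finite alphabet and let x and y be nonempty words over Σ. The language L_{x<y} = {z ∈ Σ* : |z|_x < |z|_y} is regular if and only if x is interlaced by y or y is interlaced by x. -/

import Mathlib

/-!
If `x` is interlaced by `y`, then `|w|_x ≤ |w|_y + 1` for every word `w`: either `y` sits inside
`x`, or between two consecutive occurrences of `x` there is an occurrence of `y` not contained in
the second one. Together with the near-additivity of `occCount` under concatenation, this shows that
`|z|_y - |z|_x` drops by at most `|x| + 1` when `z` is extended. Since its increments only depend on
the last `max |x| |y|` letters of `z`, the left quotients of `L_{x<y}` are determined by finitely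
many data, and the Myhill–Nerode theorem gives regularity (using complements for the other case).

Conversely, if neither word interlaces the other, there is an `x`-bordered word `a ++ x` avoiding
`y` and a `y`-bordered word `g ++ y` avoiding `x`. Pumping the borders gives words `a ^ k ++ x`
with at least `k` occurrences of `x` and none of `y`, and likewise `g ^ l ++ y`; whether
`(a ^ k ++ x) ++ (g ^ l ++ y)` lies in `L_{x<y}` for all large `l`, but only when `k` is bounded in
terms of `l`, so the quotients by the words `a ^ k ++ x` cannot take finitely many values.
-/

/-- Number of (possibly overlapping) occurrences of `x` as a contiguous
subword (factor) of `z`. -/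
def occCount {α : Type*} [DecidableEq α] (x z : List α) : ℕ :=
  ((List.range (z.length + 1)).filter (fun i => decide (x <+: z.drop i))).length

/-- `wpow w n` is the word `w` concatenated with itself `n` times. -/
def wpow {α : Type*} (w : List α) (n : ℕ) : List α := (List.replicate n w).flatten

/-- `z` is `y`-bordered: `z ≠ y` and `y` is both a prefix and a suffix of `z`. -/
def IsBordered {α : Type*} (y z : List α) : Prop := z ≠ y ∧ y <+: z ∧ y <:+ z

/-- `x` is interlaced by `y`: `y` is a subword (factor) of every `x`-bordered word. -/
def InterlacedBy {α : Type*} (x y : List α) : Prop :=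
  ∀ z : List α, IsBordered x z → y <:+: z

namespace List

variable {α : Type*}

theorem prefix_append_iff_of_length_le {x l w : List α}
    (h : x.length ≤ l.length) : x <+: l ++ w ↔ x <+: l :=
  ⟨fun hx => List.prefix_of_prefix_length_le hx (List.prefix_append l w) h,
    List.prefix_append_of_prefix⟩

theorem prefix_drop_add_of_eq_append {u v s y t : List α} {i : ℕ} (hv : v <+: u.drop i)
    (h : s ++ y ++ t = v) : y <+: u.drop (i + s.length) := by
  obtain ⟨w, hw⟩ := hv
  rw [← List.drop_drop, ← hw, ← h]
  simp

theorem infix_of_prefix_drop_of_le {u x y : List α} {j q : ℕ} (hx : x <+: u.drop j)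
    (hy : y <+: u.drop q) (hjq : j ≤ q) (hq : q + y.length ≤ j + x.length) : y <:+: x := by
  have hdrop : x.drop (q - j) = (u.drop q).take (x.length - (q - j)) := by
    conv_lhs => rw [List.prefix_iff_eq_take.1 hx]
    rw [List.drop_take, List.drop_drop, Nat.add_sub_cancel' hjq]
  have hy' : y <+: x.drop (q - j) := by
    rw [hdrop, List.prefix_take_iff]
    exact ⟨hy, by omega⟩
  exact hy'.isInfix.trans (List.drop_suffix _ _).isInfix

theorem infix_iff_exists_prefix_drop {y l : List α} : y <:+: l ↔ ∃ q, y <+: l.drop q := by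
  constructor
  · rintro ⟨s, t, h⟩
    have := prefix_drop_add_of_eq_append (i := 0) (List.prefix_refl l) h
    exact ⟨s.length, by simpa using this⟩
  · rintro ⟨q, h⟩
    exact h.isInfix.trans (List.drop_suffix _ _).isInfix

theorem infix_append_append {y p m s : List α} (h : y <:+: p ++ m ++ s) :
    y <:+: p ++ m ∨ y <:+: m ++ s ∨ m <:+: y := by
  obtain ⟨q, hq⟩ := infix_iff_exists_prefix_drop.1 h
  have hlen := hq.length_le
  simp only [List.length_drop, List.length_append] at hlen
  by_cases hpq : p.length ≤ q
  · refine .inr (.inl (infix_iff_exists_prefix_drop.2 ⟨q - p.length, ?_⟩))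
    rwa [List.append_assoc, List.drop_append, List.drop_eq_nil_of_le hpq,
      List.nil_append] at hq
  by_cases hqm : q + y.length ≤ p.length + m.length
  · exact .inl (infix_of_prefix_drop_of_le (j := 0) (by simp) hq (Nat.zero_le _)
      (by simpa using hqm))
  · have hm : m <+: (p ++ m ++ s).drop (0 + p.length) :=
      prefix_drop_add_of_eq_append (v := p ++ m ++ s) (List.prefix_refl _) rfl
    exact .inr (.inr (infix_of_prefix_drop_of_le hq hm (by omega) (by omega)))

end List

theorem Finset.card_le_card_add_one_of_interleave {S T : Finset ℕ} {m n : ℕ}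
    (hsep : ∀ i ∈ S, ∀ j ∈ S, i < j → ∃ q ∈ T, i ≤ q ∧ q + n ≤ j + m)
    (hnest : ∀ j ∈ S, ∀ q ∈ T, j ≤ q → j + m < q + n) :
    S.card ≤ T.card + 1 := by
  rcases S.eq_empty_or_nonempty with rfl | hS
  · simp
  set M := S.max' hS
  -- each non-maximal `i ∈ S` is sent to the first element of `T` after it
  set g : ℕ → ℕ := fun i => sInf {q | q ∈ T ∧ i ≤ q}
  have hg : ∀ i ∈ S.erase M,
      g i ∈ T ∧ i ≤ g i ∧ ∀ j ∈ S, i < j → g i + n ≤ j + m := by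
    intro i hi
    obtain ⟨hiM, hiS⟩ := Finset.mem_erase.1 hi
    have hlt : i < M := lt_of_le_of_ne (S.le_max' i hiS) hiM
    obtain ⟨q, hq, hiq, -⟩ := hsep i hiS M (S.max'_mem hS) hlt
    have hmem : g i ∈ {q | q ∈ T ∧ i ≤ q} := Nat.sInf_mem ⟨q, hq, hiq⟩
    refine ⟨hmem.1, hmem.2, fun j hj hij => ?_⟩
    obtain ⟨q', hq', hiq', hq'j⟩ := hsep i hiS j hj hij
    have : g i ≤ q' := Nat.sInf_le ⟨hq', hiq'⟩
    omega
  have hne : ∀ a ∈ S.erase M, ∀ b ∈ S.erase M, a < b → g a ≠ g b := by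
    intro a ha b hb hab heq
    have hba := (hg a ha).2.2 b (Finset.mem_of_mem_erase hb) hab
    have hbg := hnest b (Finset.mem_of_mem_erase hb) (g b) (hg b hb).1 (hg b hb).2.1
    omega
  have hcard : (S.erase M).card ≤ T.card := by
    refine Finset.card_le_card_of_injOn g (fun i hi => (hg i hi).1) fun a ha b hb heq => ?_
    rcases lt_trichotomy a b with hab | hab | hab
    · exact absurd heq (hne a ha b hb hab)
    · exact hab
    · exact absurd heq.symm (hne b hb a ha hab)
  rw [Finset.card_erase_of_mem (S.max'_mem hS)] at hcard
  omega

theorem Language.isRegular_setOf_lt_of_bounded_drop {α : Type*} [Finite α] (φ : List α → ℤ)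
    (K : ℕ) (C t : ℤ)
    (hlocal : ∀ p r w : List α, K ≤ r.length →
      φ (p ++ r ++ w) - φ (p ++ r) = φ (r ++ w) - φ r)
    (hdrop : ∀ z w, φ z - C ≤ φ (z ++ w)) :
    Language.IsRegular ({z | t < φ z} : Language α) := by
  refine Language.IsRegular.of_finite_range_leftQuotient ?_
  have hshift : ∀ z w, φ (z ++ w) - φ z =
      φ (z.drop (z.length - K) ++ w) - φ (z.drop (z.length - K)) := by
    intro z w
    rcases le_or_gt K z.length with hK | hK
    · have := hlocal (z.take (z.length - K)) (z.drop (z.length - K)) w (by simp; omega)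
      rwa [List.take_append_drop] at this
    · rw [Nat.sub_eq_zero_of_le hK.le, List.drop_zero]
  -- the quotient by `z` is everything once `t + C < φ z`; otherwise it is determined by the
  -- last `K` letters of `z` and by `φ z ∈ [φ [] - C, t + C]`
  have hfin : ((fun rv : List α × ℤ =>
      ({w | t < rv.2 + (φ (rv.1 ++ w) - φ rv.1)} : Language α)) ''
        ({r | r.length ≤ K} ×ˢ Set.Icc (φ [] - C) (t + C))).Finite :=
    ((List.finite_length_le α K).prod (Set.finite_Icc _ _)).image _
  refine (hfin.insert Set.univ).subset ?_
  rintro _ ⟨z, rfl⟩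
  by_cases hz : t + C < φ z
  · refine Or.inl (Set.eq_univ_of_forall fun w => ?_)
    have := hdrop z w
    show t < φ (z ++ w)
    omega
  · refine Or.inr ⟨(z.drop (z.length - K), φ z), ⟨by simp; omega, ?_, not_lt.1 hz⟩, ?_⟩
    · simpa using hdrop [] z
    · ext w
      have := hshift z w
      show t < φ z + (φ (z.drop (z.length - K) ++ w) - φ (z.drop (z.length - K))) ↔
        t < φ (z ++ w)
      omega

theorem Language.not_isRegular_of_forall_exists_append_mem {α : Type*} {L : Language α}
    (A B : ℕ → List α) (bound : ℕ → ℕ) (hex : ∀ k, ∃ l, A k ++ B l ∈ L)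
    (hle : ∀ k l, A k ++ B l ∈ L → k ≤ bound l) : ¬ L.IsRegular := by
  intro hreg
  -- the least `l` with `B l` in a quotient bounds every `k` whose `A k` has that quotient
  set m : Language α → ℕ := fun Q => sInf {l | B l ∈ Q}
  have hm : ∀ k, A k ++ B (m (L.leftQuotient (A k))) ∈ L := fun k => Nat.sInf_mem (hex k)
  obtain ⟨N, hN⟩ := (hreg.finite_range_leftQuotient.image (bound ∘ m)).bddAbove
  have h1 := hle (N + 1) _ (hm (N + 1))
  have h2 := hN ⟨_, ⟨A (N + 1), rfl⟩, rfl⟩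
  simp only [Function.comp_apply] at h2
  omega

section Words

variable {α : Type*}

theorem wpow_succ (a : List α) (k : ℕ) : wpow a (k + 1) = a ++ wpow a k := by
  simp [wpow, List.replicate_succ]

theorem InterlacedBy.of_infix {x y : List α} (h : y <:+: x) : InterlacedBy x y :=
  fun _ hz => h.trans hz.2.1.isInfix

theorem InterlacedBy.exists_prefix_drop_between {x y u : List α} (h : InterlacedBy x y)
    (hx : x ≠ []) {i j : ℕ} (hi : x <+: u.drop i) (hj : x <+: u.drop j) (hij : i < j) :
    ∃ q, y <+: u.drop q ∧ i ≤ q ∧ q + y.length ≤ j + x.length := by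
  have hjx := hj.length_le
  have := List.length_pos_iff.2 hx
  simp only [List.length_drop] at hjx
  set v := (u.drop i).take (j + x.length - i)
  have hvlen : v.length = j + x.length - i := by simp [v]; omega
  have hpre : x <+: v := List.prefix_take_iff.2 ⟨hi, by omega⟩
  have hsuf : x <:+ v := by
    have : v.drop (j - i) = x := by
      rw [List.drop_take, List.drop_drop, Nat.add_sub_cancel' hij.le,
        show j + x.length - i - (j - i) = x.length by omega]
      exact (List.prefix_iff_eq_take.1 hj).symm
    exact this ▸ List.drop_suffix _ _
  have hvx : v ≠ x := fun hv => by have := congrArg List.length hv; omega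
  obtain ⟨s, t, hst⟩ := h v ⟨hvx, hpre, hsuf⟩
  refine ⟨i + s.length, List.prefix_drop_add_of_eq_append (List.take_prefix _ _) hst,
    by omega, ?_⟩
  have := congrArg List.length hst
  simp only [List.length_append] at this
  omega

end Words

section Occurrences

variable {α : Type*} [DecidableEq α]

theorem occCount_nil {x : List α} (hx : x ≠ []) : occCount x [] = 0 := by
  simp [occCount, hx]

theorem occCount_cons (x u : List α) (c : α) :
    occCount x (c :: u) = occCount x u + if x <+: c :: u then 1 else 0 := by
  simp only [occCount, List.length_cons, List.range_succ_eq_map, List.filter_cons, List.filter_map,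
    List.drop_zero, Function.comp_def, List.drop_succ_cons]
  split <;> simp_all [add_comm]

theorem occCount_le_length_add_one (x u : List α) : occCount x u ≤ u.length + 1 :=
  (List.length_filter_le _ _).trans (List.length_range ..).le

theorem occCount_eq_zero_iff {x u : List α} : occCount x u = 0 ↔ ¬ x <:+: u := by
  induction u with
  | nil => by_cases hx : x = [] <;> simp [occCount, hx]
  | cons c u ih =>
    rw [occCount_cons, List.infix_cons_iff]
    split_ifs <;> simp_all

theorem occCount_le_occCount_append (x p u : List α) : occCount x u ≤ occCount x (p ++ u) := by
  induction p with
  | nil => rfl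
  | cons c p ih => rw [List.cons_append, occCount_cons]; omega

theorem occCount_add_one_le_occCount_append {x a v : List α} (ha : a ≠ []) (h : x <+: a ++ v) :
    occCount x v + 1 ≤ occCount x (a ++ v) := by
  obtain ⟨c, a, rfl⟩ := List.exists_cons_of_ne_nil ha
  rw [List.cons_append, occCount_cons, if_pos (by simpa using h)]
  have := occCount_le_occCount_append x a v
  omega

theorem occCount_add_occCount_le_append {x : List α} (hx : x ≠ []) (p u : List α) :
    occCount x p + occCount x u ≤ occCount x (p ++ u) := by
  induction p with
  | nil => simp [occCount_nil hx]
  | cons c p ih =>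
    rw [List.cons_append, occCount_cons, occCount_cons]
    have : x <+: c :: p → x <+: c :: (p ++ u) := List.prefix_append_of_prefix
    split_ifs <;> simp_all <;> omega

theorem occCount_append_le_add_min (x p u : List α) :
    occCount x (p ++ u) ≤ occCount x p + occCount x u + min p.length x.length := by
  induction p with
  | nil => simp
  | cons c p ih =>
    rw [List.cons_append, occCount_cons, occCount_cons]
    have : x <+: c :: (p ++ u) → x <+: c :: p ∨ p.length + 1 < x.length := by
      intro h
      by_cases hlen : x.length ≤ p.length + 1
      · exact .inl ((List.prefix_append_iff_of_length_le (w := u) hlen).1 h)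
      · exact .inr (by omega)
    split_ifs <;> simp_all <;> omega

theorem occCount_append_le (x p u : List α) :
    occCount x (p ++ u) ≤ occCount x p + occCount x u + x.length :=
  (occCount_append_le_add_min x p u).trans (by omega)

theorem occCount_append_append_add {x r : List α} (hr : x.length ≤ r.length + 1)
    (p w : List α) :
    occCount x (p ++ r ++ w) + occCount x r = occCount x (p ++ r) + occCount x (r ++ w) := by
  induction p with
  | nil => simp [add_comm]
  | cons c p ih =>
    simp only [List.cons_append] at ih ⊢
    have hlen : x.length ≤ (c :: (p ++ r)).length := by simp; omega
    rw [occCount_cons, occCount_cons, ← List.cons_append]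
    simp only [List.prefix_append_iff_of_length_le hlen]
    omega

def occurrences (x u : List α) : Finset ℕ := {i ∈ Finset.range (u.length + 1) | x <+: u.drop i}

theorem card_occurrences (x u : List α) : (occurrences x u).card = occCount x u := rfl

theorem mem_occurrences {x u : List α} (hx : x ≠ []) {i : ℕ} :
    i ∈ occurrences x u ↔ x <+: u.drop i := by
  refine ⟨fun h => (Finset.mem_filter.1 h).2, fun h => Finset.mem_filter.2 ⟨?_, h⟩⟩
  have hlen := h.length_le
  have := List.length_pos_iff.2 hx
  simp only [List.length_drop] at hlen
  exact Finset.mem_range.2 (by omega)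

theorem occCount_le_occCount_add_one_of_interlacedBy {x y : List α} (hx : x ≠ []) (hy : y ≠ [])
    (h : InterlacedBy x y) (w : List α) : occCount x w ≤ occCount y w + 1 := by
  rw [← card_occurrences, ← card_occurrences]
  by_cases hyx : y <:+: x
  · obtain ⟨s, t, hst⟩ := hyx
    refine (Finset.card_le_card_of_injOn (· + s.length) (fun i hi => ?_)
      fun a _ b _ hab => Nat.add_right_cancel hab).trans (Nat.le_succ _)
    exact (mem_occurrences hy).2
      (List.prefix_drop_add_of_eq_append ((mem_occurrences hx).1 hi) hst)
  · refine Finset.card_le_card_add_one_of_interleave (m := x.length) (n := y.length)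
      (fun i hi j hj hij => ?_) fun j hj q hq hjq => ?_
    · obtain ⟨q, hq, hiq, hqj⟩ := h.exists_prefix_drop_between hx ((mem_occurrences hx).1 hi)
        ((mem_occurrences hx).1 hj) hij
      exact ⟨q, (mem_occurrences hy).2 hq, hiq, hqj⟩
    · by_contra hle
      exact hyx (List.infix_of_prefix_drop_of_le ((mem_occurrences hx).1 hj)
        ((mem_occurrences hy).1 hq) hjq (by omega))

theorem occCount_sub_occCount_append_ge {x y : List α} (hx : x ≠ []) (hy : y ≠ [])
    (h : InterlacedBy x y) (z w : List α) :
    (occCount y z : ℤ) - occCount x z - (x.length + 1) ≤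
      (occCount y (z ++ w) : ℤ) - occCount x (z ++ w) := by
  have hxw := occCount_le_occCount_add_one_of_interlacedBy hx hy h w
  have hx_sub := occCount_append_le x z w
  have hy_sup := occCount_add_occCount_le_append hy z w
  omega

theorem InterlacedBy.isRegular_setOf_lt_occCount_sub [Finite α] {x y : List α}
    (h : InterlacedBy x y) (hx : x ≠ []) (hy : y ≠ []) (t : ℤ) :
    Language.IsRegular ({z | t < (occCount y z : ℤ) - occCount x z} : Language α) := by
  refine Language.isRegular_setOf_lt_of_bounded_drop _ (max x.length y.length) (x.length + 1) t
    (fun p r w hr => ?_) (occCount_sub_occCount_append_ge hx hy h)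
  have hrx := occCount_append_append_add (x := x) (r := r) (by omega) p w
  have hry := occCount_append_append_add (x := y) (r := r) (by omega) p w
  omega

theorem isRegular_setOf_occCount_lt [Finite α] {x y : List α} (hx : x ≠ []) (hy : y ≠ [])
    (h : InterlacedBy x y ∨ InterlacedBy y x) :
    Language.IsRegular ({z | occCount x z < occCount y z} : Language α) := by
  rcases h with h | h
  · have hL : ({z | occCount x z < occCount y z} : Language α) =
        {z | 0 < (occCount y z : ℤ) - occCount x z} := by
      ext z
      change occCount x z < occCount y z ↔ 0 < (occCount y z : ℤ) - occCount x z
      omega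
    exact hL ▸ h.isRegular_setOf_lt_occCount_sub hx hy 0
  · have hL : ({z | occCount x z < occCount y z} : Language α) =
        {z | -1 < (occCount x z : ℤ) - occCount y z}ᶜ := by
      ext z
      change occCount x z < occCount y z ↔ ¬ -1 < (occCount x z : ℤ) - occCount y z
      omega
    exact hL ▸ (h.isRegular_setOf_lt_occCount_sub hy hx (-1)).compl

theorem exists_pumping_of_not_interlacedBy {x y : List α} (hxy : ¬ InterlacedBy x y)
    (hyx : ¬ x <:+: y) :
    ∃ A : ℕ → List α, ∀ k, k ≤ occCount x (A k) ∧ occCount y (A k) = 0 := by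
  simp only [InterlacedBy, IsBordered, not_forall, exists_prop] at hxy
  obtain ⟨_, ⟨hne, hpre, a, rfl⟩, hy⟩ := hxy
  have ha : a ≠ [] := by rintro rfl; exact hne rfl
  have key : ∀ k, x <+: wpow a k ++ x ∧ k ≤ occCount x (wpow a k ++ x) ∧
      ¬ y <:+: wpow a k ++ x := by
    intro k
    induction k with
    | zero => exact ⟨List.prefix_refl x, Nat.zero_le _,
        fun h => hy (h.trans (List.suffix_append a x).isInfix)⟩
    | succ k ih =>
      obtain ⟨⟨c, hc⟩, hcount, hfree⟩ := ih
      rw [← hc] at hcount hfree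
      rw [wpow_succ, List.append_assoc, ← hc, ← List.append_assoc]
      have hpre' : x <+: a ++ x ++ c := List.prefix_append_of_prefix hpre
      refine ⟨hpre', ?_, fun h => ?_⟩
      · rw [List.append_assoc] at hpre' ⊢
        have := occCount_add_one_le_occCount_append ha hpre'
        omega
      · rcases List.infix_append_append h with h | h | h
        · exact hy h
        · exact hfree h
        · exact hyx h
  exact ⟨fun k => wpow a k ++ x, fun k => ⟨(key k).2.1, occCount_eq_zero_iff.2 (key k).2.2⟩⟩

theorem not_isRegular_setOf_occCount_lt {x y : List α} (hx : x ≠ []) (hxy : ¬ InterlacedBy x y)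
    (hyx : ¬ InterlacedBy y x) :
    ¬ Language.IsRegular ({z | occCount x z < occCount y z} : Language α) := by
  obtain ⟨A, hA⟩ := exists_pumping_of_not_interlacedBy hxy fun h => hyx (.of_infix h)
  obtain ⟨B, hB⟩ := exists_pumping_of_not_interlacedBy hyx fun h => hxy (.of_infix h)
  refine Language.not_isRegular_of_forall_exists_append_mem A B
    (fun l => (B l).length + 1 + y.length)
    (fun k => ⟨(A k).length + x.length + 2, ?_⟩) fun k l hkl => ?_
  · set l := (A k).length + x.length + 2
    show occCount x (A k ++ B l) < occCount y (A k ++ B l)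
    have := occCount_append_le x (A k) (B l)
    have := occCount_le_length_add_one x (A k)
    have := occCount_le_occCount_append y (A k) (B l)
    have := hB l
    omega
  · have hlt : occCount x (A k ++ B l) < occCount y (A k ++ B l) := hkl
    have := occCount_add_occCount_le_append hx (A k) (B l)
    have := occCount_append_le y (A k) (B l)
    have := occCount_le_length_add_one y (B l)
    have := hA k
    omega

end Occurrences

theorem stmt_6 {α : Type} [Fintype α] [DecidableEq α] (x y : List α)
    (hx : x ≠ []) (hy : y ≠ []) :
    Language.IsRegular ({z : List α | occCount x z < occCount y z} : Language α) ↔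
      InterlacedBy x y ∨ InterlacedBy y x := by
  refine ⟨fun hreg => ?_, isRegular_setOf_occCount_lt hx hy⟩
  by_contra h
  exact not_isRegular_setOf_occCount_lt hx (fun h' => h (.inl h')) (fun h' => h (.inr h')) hreg
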